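/- Suppose G = G₁ × G₂ acts with cohomogeneity one on a closed topological manifold M with group diagram (G, H, K⁻, K⁺), and the projection of H to G₂ is all of G₂. Then the restricted action of G₁ × 1 on M is also of cohomogeneity one with the same orbits, with isotropy groups K^± ∩ (G₁ × 1) and H ∩ (G₁ × 1). -/

import Mathlib

/-!
Conjugating `H` into the stabilizer of `x` shows that the stabilizer of every point still
projects onto `G₂`. Hence for any `(a, b)` there is `h` fixing `x` with `h.2 = b⁻¹`, and
`(a, b) • x = ((a, b) * h) • x` with `(a, b) * h ∈ G₁ × 1`.
-/

theorem Subgroup.map_eq_top_of_forall_conj_mem {G N : Type*} [Group G] [Group N]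
    (f : G →* N) {H K : Subgroup G} {g : G} (hconj : ∀ h ∈ H, g * h * g⁻¹ ∈ K)
    (hH : H.map f = ⊤) : K.map f = ⊤ := by
  refine eq_top_iff.2 fun c _ => ?_
  obtain ⟨h, hh, hfh⟩ : (f g)⁻¹ * c * f g ∈ H.map f := hH ▸ Subgroup.mem_top _
  exact ⟨g * h * g⁻¹, hconj h hh, by simp [hfh, mul_assoc]⟩

theorem MulAction.orbit_prod_eq_range_inl_smul {G₁ G₂ α : Type*} [Group G₁] [Group G₂]
    [MulAction (G₁ × G₂) α] {x : α}
    (hx : (stabilizer (G₁ × G₂) x).map (MonoidHom.snd G₁ G₂) = ⊤) :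
    orbit (G₁ × G₂) x = Set.range fun g₁ : G₁ => ((g₁, (1 : G₂)) : G₁ × G₂) • x := by
  refine subset_antisymm ?_ fun _ ⟨g₁, hg₁⟩ => ⟨(g₁, 1), hg₁⟩
  rintro _ ⟨⟨a, b⟩, rfl⟩
  obtain ⟨h, hh, hb⟩ : b⁻¹ ∈ (stabilizer (G₁ × G₂) x).map (MonoidHom.snd G₁ G₂) :=
    hx ▸ Subgroup.mem_top _
  have hmul : ((a * h.1, (1 : G₂)) : G₁ × G₂) = (a, b) * h := by
    ext
    · rfl
    · simp [show h.2 = b⁻¹ from hb]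
  refine ⟨a * h.1, ?_⟩
  simp only [hmul, mul_smul, mem_stabilizer_iff.1 hh]

theorem reducible_cohomogeneity_one_subaction_general
    {G₁ G₂ M : Type*} [Group G₁] [Group G₂]
    [MulAction (G₁ × G₂) M]
    (x₀ : M)
    (hprincipal : ∀ y : M, ∃ g : G₁ × G₂,
      ∀ h ∈ MulAction.stabilizer (G₁ × G₂) x₀, g * h * g⁻¹ ∈ MulAction.stabilizer (G₁ × G₂) y)
    (hproj : Subgroup.map (MonoidHom.snd G₁ G₂) (MulAction.stabilizer (G₁ × G₂) x₀) = ⊤) :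
    ∀ x : M,
      (MulAction.orbit (G₁ × G₂) x = Set.range (fun g₁ : G₁ => ((g₁, (1 : G₂)) : G₁ × G₂) • x)) ∧
      ({g₁ : G₁ | ((g₁, (1 : G₂)) : G₁ × G₂) • x = x}
        = (MonoidHom.inl G₁ G₂) ⁻¹' (MulAction.stabilizer (G₁ × G₂) x : Set (G₁ × G₂))) := by
  intro x
  obtain ⟨g, hg⟩ := hprincipal x
  have hx := Subgroup.map_eq_top_of_forall_conj_mem (MonoidHom.snd G₁ G₂) hg hproj
  exact ⟨MulAction.orbit_prod_eq_range_inl_smul hx, rfl⟩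

theorem reducible_cohomogeneity_one_subaction
    {G₁ G₂ M : Type*} [Group G₁] [Group G₂]
    [TopologicalSpace G₁] [TopologicalSpace G₂] [IsTopologicalGroup G₁] [IsTopologicalGroup G₂]
    [CompactSpace G₁] [CompactSpace G₂]
    (n : ℕ) [TopologicalSpace M] [T2Space M] [CompactSpace M]
    [ChartedSpace (EuclideanSpace ℝ (Fin n)) M]
    [MulAction (G₁ × G₂) M] [ContinuousSMul (G₁ × G₂) M]
    (x₀ : M)
    (hprincipal : ∀ y : M, ∃ g : G₁ × G₂,
      ∀ h ∈ MulAction.stabilizer (G₁ × G₂) x₀, g * h * g⁻¹ ∈ MulAction.stabilizer (G₁ × G₂) y)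
    (hproj : Subgroup.map (MonoidHom.snd G₁ G₂) (MulAction.stabilizer (G₁ × G₂) x₀) = ⊤) :
    ∀ x : M,
      (MulAction.orbit (G₁ × G₂) x = Set.range (fun g₁ : G₁ => ((g₁, (1 : G₂)) : G₁ × G₂) • x)) ∧
      ({g₁ : G₁ | ((g₁, (1 : G₂)) : G₁ × G₂) • x = x}
        = (MonoidHom.inl G₁ G₂) ⁻¹' (MulAction.stabilizer (G₁ × G₂) x : Set (G₁ × G₂))) :=
  reducible_cohomogeneity_one_subaction_general x₀ hprincipal hproj
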